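/- arXiv:1210.0705 — 2 statements merged into one kernel-verified Lean document; each statement's English description precedes it below -/
import Mathlib

section
/- Let 0 < α < 1 and f be continuously differentiable on [a,b]. Then (aJ^α_b (ᶜaD^α f)) = f(b) - f(a), i.e., (1/Γ(α)) ∫_a^b (ᶜaD^α_x f)(x) (b-x)^{α-1} dx = f(b) - f(a). -/
open MeasureTheory intervalIntegral Real Set

/-!
The Caputo derivative `ᶜaD^α f` is the Riemann–Liouville integral `aJ^{1-α} f'`, so the left-hand
side is `aJ^α (aJ^{1-α} f') (b)`. Riemann–Liouville integrals compose additively in the order: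
exchanging the two integrations over the triangle `a < u < x < b` (Dirichlet's formula) leaves the
inner integral `∫_u^b (x - u)^(γ-1) (b - x)^(β-1) dx = (b - u)^(β+γ-1) B(γ, β)`, and
`B(γ, β) = Γ(γ) Γ(β) / Γ(β + γ)`. Hence the left-hand side is `aJ^1 f' (b) = ∫_a^b f' = f b - f a`.
-/

/-- The left Caputo fractional derivative of order `α ∈ (0,1)`. -/
noncomputable def leftCaputo (α a : ℝ) (f : ℝ → ℝ) (x : ℝ) : ℝ :=
  (1 / Real.Gamma (1 - α)) * ∫ u in a..x, deriv f u * (x - u) ^ (-α)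

theorem integral_sub_rpow_mul_sub_rpow {s t c d : ℝ} (hs : 0 < s) (ht : 0 < t) (hcd : c < d) :
    ∫ x in c..d, (x - c) ^ (s - 1) * (d - x) ^ (t - 1)
      = (d - c) ^ (s + t - 1) * ProbabilityTheory.beta s t := by
  have hshift : ∫ x in c..d, (x - c) ^ (s - 1) * (d - x) ^ (t - 1)
      = ∫ x in (0 : ℝ)..(d - c), x ^ (s - 1) * (d - c - x) ^ (t - 1) := by
    simpa only [sub_self, sub_sub_sub_cancel_right] using
      integral_comp_sub_right (a := c) (b := d) (fun x => x ^ (s - 1) * (d - c - x) ^ (t - 1)) c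
  rw [hshift]
  apply Complex.ofReal_injective
  rw [← intervalIntegral.integral_ofReal]
  have hcomplex : ∫ x in (0 : ℝ)..(d - c), ((x ^ (s - 1) * (d - c - x) ^ (t - 1) : ℝ) : ℂ)
      = ∫ x in (0 : ℝ)..(d - c),
          (x : ℂ) ^ ((s : ℂ) - 1) * (((d - c : ℝ) : ℂ) - x) ^ ((t : ℂ) - 1) := by
    refine integral_congr fun x hx => ?_
    rw [uIcc_of_le (sub_nonneg.2 hcd.le)] at hx
    rw [Complex.ofReal_mul, Complex.ofReal_cpow hx.1, Complex.ofReal_cpow (sub_nonneg.2 hx.2)]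
    push_cast
    rfl
  rw [hcomplex, Complex.betaIntegral_scaled _ _ (sub_pos.2 hcd),
    Complex.betaIntegral_eq_Gamma_mul_div _ _ (by simpa) (by simpa), ProbabilityTheory.beta,
    ← Complex.ofReal_add, Complex.Gamma_ofReal, Complex.Gamma_ofReal, Complex.Gamma_ofReal]
  push_cast [Complex.ofReal_cpow (sub_nonneg.2 hcd.le)]
  rfl

theorem intervalIntegrable_sub_rpow_mul_sub_rpow {s t c d : ℝ} (hs : 0 < s) (ht : 0 < t)
    (hcd : c < d) :
    IntervalIntegrable (fun x => (x - c) ^ (s - 1) * (d - x) ^ (t - 1)) volume c d := by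
  refine intervalIntegrable_of_integral_ne_zero ?_
  rw [integral_sub_rpow_mul_sub_rpow hs ht hcd]
  exact (mul_pos (rpow_pos_of_pos (sub_pos.2 hcd) _) (ProbabilityTheory.beta_pos hs ht)).ne'

theorem aestronglyMeasurable_of_integrableOn_mul_rpow {g : ℝ → ℝ} {a b e : ℝ}
    (hg : IntegrableOn (fun u => g u * (b - u) ^ e) (Ioo a b)) :
    AEStronglyMeasurable g (volume.restrict (Ioo a b)) := by
  refine (hg.aestronglyMeasurable.mul
    (by fun_prop : Measurable fun u => ((b - u) ^ e)⁻¹).aestronglyMeasurable).congr ?_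
  filter_upwards [ae_restrict_mem measurableSet_Ioo] with u hu
  rw [Pi.mul_apply, mul_assoc, mul_inv_cancel₀ (rpow_pos_of_pos (sub_pos.2 hu.2) e).ne', mul_one]

noncomputable def riemannLiouville (β a : ℝ) (g : ℝ → ℝ) (x : ℝ) : ℝ :=
  (1 / Gamma β) * ∫ u in a..x, g u * (x - u) ^ (β - 1)

theorem leftCaputo_eq_riemannLiouville (α a : ℝ) (f : ℝ → ℝ) :
    leftCaputo α a f = riemannLiouville (1 - α) a (deriv f) := by
  ext x
  rw [leftCaputo, riemannLiouville, sub_sub_cancel_left]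

theorem riemannLiouville_one (a : ℝ) (g : ℝ → ℝ) (x : ℝ) :
    riemannLiouville 1 a g x = ∫ u in a..x, g u := by
  simp [riemannLiouville]

noncomputable def iteratedRiemannLiouvilleIntegrand (β γ b : ℝ) (g : ℝ → ℝ) (x u : ℝ) : ℝ :=
  if u < x then g u * ((x - u) ^ (γ - 1) * (b - x) ^ (β - 1)) else 0

section IteratedRiemannLiouville

variable {β γ a b : ℝ} {g : ℝ → ℝ}

local notation "F" => iteratedRiemannLiouvilleIntegrand β γ b

theorem iteratedRiemannLiouvilleIntegrand_eq_indicator_Iio (x : ℝ) :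
    (fun u => F g x u)
      = (Iio x).indicator fun u => g u * (x - u) ^ (γ - 1) * (b - x) ^ (β - 1) := by
  ext u
  simp [iteratedRiemannLiouvilleIntegrand, Set.indicator_apply, mul_assoc]

theorem iteratedRiemannLiouvilleIntegrand_eq_indicator_Ioi (u : ℝ) :
    (fun x => F g x u)
      = (Ioi u).indicator fun x => g u * ((x - u) ^ (γ - 1) * (b - x) ^ (β - 1)) := by
  ext x
  simp [iteratedRiemannLiouvilleIntegrand, Set.indicator_apply]

theorem uncurry_iteratedRiemannLiouvilleIntegrand :
    Function.uncurry (F g) = {p : ℝ × ℝ | p.2 < p.1}.indicator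
      fun p => g p.2 * ((p.1 - p.2) ^ (γ - 1) * (b - p.1) ^ (β - 1)) := by
  ext p
  simp [Function.uncurry, iteratedRiemannLiouvilleIntegrand, Set.indicator_apply]

theorem norm_iteratedRiemannLiouvilleIntegrand {x u : ℝ} (hx : x < b) :
    ‖F g x u‖ = F (fun u => ‖g u‖) x u := by
  unfold iteratedRiemannLiouvilleIntegrand
  split_ifs with hux
  · rw [norm_mul, Real.norm_of_nonneg (mul_nonneg (rpow_nonneg (sub_nonneg.2 hux.le) _)
      (rpow_nonneg (sub_nonneg.2 hx.le) _))]
  · exact norm_zero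

theorem integral_iteratedRiemannLiouvilleIntegrand_snd {x : ℝ} (hx : x ∈ Ioo a b) :
    ∫ u in Ioo a b, F g x u = (∫ u in a..x, g u * (x - u) ^ (γ - 1)) * (b - x) ^ (β - 1) := by
  rw [iteratedRiemannLiouvilleIntegrand_eq_indicator_Iio,
    MeasureTheory.integral_indicator measurableSet_Iio, Measure.restrict_restrict measurableSet_Iio,
    Iio_inter_Ioo, min_eq_left hx.2.le, ← integral_Ioc_eq_integral_Ioo, ← integral_of_le hx.1.le,
    intervalIntegral.integral_mul_const]

theorem integral_iteratedRiemannLiouvilleIntegrand_fst (hβ : 0 < β) (hγ : 0 < γ) {u : ℝ}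
    (hu : u ∈ Ioo a b) :
    ∫ x in Ioo a b, F g x u = g u * (b - u) ^ (β + γ - 1) * ProbabilityTheory.beta γ β := by
  rw [iteratedRiemannLiouvilleIntegrand_eq_indicator_Ioi,
    MeasureTheory.integral_indicator measurableSet_Ioi, Measure.restrict_restrict measurableSet_Ioi,
    Ioi_inter_Ioo, max_eq_left hu.1.le, ← integral_Ioc_eq_integral_Ioo, ← integral_of_le hu.2.le,
    intervalIntegral.integral_const_mul, integral_sub_rpow_mul_sub_rpow hγ hβ hu.2, add_comm γ,
    mul_assoc]

theorem integrable_iteratedRiemannLiouvilleIntegrand_fst (hβ : 0 < β) (hγ : 0 < γ) {u : ℝ}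
    (hu : u ∈ Ioo a b) : Integrable (fun x => F g x u) (volume.restrict (Ioo a b)) := by
  rw [iteratedRiemannLiouvilleIntegrand_eq_indicator_Ioi,
    integrable_indicator_iff measurableSet_Ioi, IntegrableOn,
    Measure.restrict_restrict measurableSet_Ioi, Ioi_inter_Ioo, max_eq_left hu.1.le]
  exact (intervalIntegrable_iff_integrableOn_Ioo_of_le hu.2.le).1
    ((intervalIntegrable_sub_rpow_mul_sub_rpow hγ hβ hu.2).const_mul (g u))

theorem aestronglyMeasurable_iteratedRiemannLiouvilleIntegrand
    (hg : AEStronglyMeasurable g (volume.restrict (Ioo a b))) :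
    AEStronglyMeasurable (Function.uncurry (F g))
      ((volume.restrict (Ioo a b)).prod (volume.restrict (Ioo a b))) := by
  rw [uncurry_iteratedRiemannLiouvilleIntegrand]
  exact (hg.comp_snd.mul (by fun_prop : Measurable fun p : ℝ × ℝ =>
    (p.1 - p.2) ^ (γ - 1) * (b - p.1) ^ (β - 1)).aestronglyMeasurable).indicator
    (measurableSet_lt measurable_snd measurable_fst)

theorem integrable_iteratedRiemannLiouvilleIntegrand (hβ : 0 < β) (hγ : 0 < γ)
    (hg : IntegrableOn (fun u => g u * (b - u) ^ (β + γ - 1)) (Ioo a b)) :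
    Integrable (Function.uncurry (F g))
      ((volume.restrict (Ioo a b)).prod (volume.restrict (Ioo a b))) := by
  refine (integrable_prod_iff' (aestronglyMeasurable_iteratedRiemannLiouvilleIntegrand
    (aestronglyMeasurable_of_integrableOn_mul_rpow hg))).2 ⟨?_, ?_⟩
  · filter_upwards [ae_restrict_mem measurableSet_Ioo] with u hu
    exact integrable_iteratedRiemannLiouvilleIntegrand_fst hβ hγ hu
  · refine (hg.norm.mul_const (ProbabilityTheory.beta γ β)).congr ?_
    filter_upwards [ae_restrict_mem measurableSet_Ioo] with u hu
    rw [norm_mul, Real.norm_of_nonneg (rpow_nonneg (sub_nonneg.2 hu.2.le) _),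
      ← integral_iteratedRiemannLiouvilleIntegrand_fst (g := fun u => ‖g u‖) hβ hγ hu]
    exact setIntegral_congr_fun measurableSet_Ioo fun x hx =>
      (norm_iteratedRiemannLiouvilleIntegrand hx.2).symm

end IteratedRiemannLiouville

theorem riemannLiouville_riemannLiouville {β γ a b : ℝ} {g : ℝ → ℝ} (hβ : 0 < β) (hγ : 0 < γ)
    (hab : a ≤ b) (hg : IntegrableOn (fun u => g u * (b - u) ^ (β + γ - 1)) (Ioo a b)) :
    riemannLiouville β a (riemannLiouville γ a g) b = riemannLiouville (β + γ) a g b := by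
  set F := iteratedRiemannLiouvilleIntegrand β γ b g
  calc riemannLiouville β a (riemannLiouville γ a g) b
      = 1 / Gamma β * (1 / Gamma γ * ∫ x in Ioo a b, ∫ u in Ioo a b, F x u) := by
        rw [riemannLiouville]
        congr 1
        rw [intervalIntegral.integral_of_le hab, integral_Ioc_eq_integral_Ioo,
          ← MeasureTheory.integral_const_mul]
        refine setIntegral_congr_fun measurableSet_Ioo fun x hx => ?_
        rw [riemannLiouville, integral_iteratedRiemannLiouvilleIntegrand_snd hx, mul_assoc]
    _ = 1 / Gamma β * (1 / Gamma γ *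
          ∫ u in Ioo a b, g u * (b - u) ^ (β + γ - 1) * ProbabilityTheory.beta γ β) := by
        rw [integral_integral_swap (integrable_iteratedRiemannLiouvilleIntegrand hβ hγ hg)]
        congr 2
        exact setIntegral_congr_fun measurableSet_Ioo fun u hu =>
          integral_iteratedRiemannLiouvilleIntegrand_fst hβ hγ hu
    _ = riemannLiouville (β + γ) a g b := by
        rw [riemannLiouville, intervalIntegral.integral_of_le hab, integral_Ioc_eq_integral_Ioo,
          MeasureTheory.integral_mul_const, ProbabilityTheory.beta, add_comm γ]
        field_simp [(Gamma_pos_of_pos hβ).ne', (Gamma_pos_of_pos hγ).ne']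

/-- Fundamental theorem of Caputo fractional calculus:
`(1/Γ(α)) ∫_a^b (ᶜaD^α_x f)(x) (b-x)^{α-1} dx = f(b) - f(a)`. -/
theorem caputo_FTC (α a b : ℝ) (hα₀ : 0 < α) (hα₁ : α < 1) (hab : a < b)
    (f : ℝ → ℝ)
    (hdiff : ∀ x ∈ Set.Icc a b, HasDerivAt f (deriv f x) x)
    (hcont : ContinuousOn (deriv f) (Set.Icc a b)) :
    (1 / Real.Gamma α) * (∫ x in a..b, leftCaputo α a f x * (b - x) ^ (α - 1))
      = f b - f a := by
  have hg : IntegrableOn (fun u => deriv f u * (b - u) ^ (α + (1 - α) - 1)) (Ioo a b) := by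
    simpa using (hcont.integrableOn_Icc (μ := volume)).mono_set Ioo_subset_Icc_self
  change riemannLiouville α a (leftCaputo α a f) b = f b - f a
  rw [leftCaputo_eq_riemannLiouville,
    riemannLiouville_riemannLiouville hα₀ (by linarith) hab.le hg, add_sub_cancel,
    riemannLiouville_one]
  exact integral_eq_sub_of_hasDerivAt (fun x hx => hdiff x (by rwa [uIcc_of_le hab.le] at hx))
    (hcont.intervalIntegrable_of_Icc hab.le)
end

section
/- Let 0 < α < 1 and f be continuously differentiable on [a,b]. Then the right-sided analogue holds: (1/Γ(α)) ∫_a^b (ᶜxD^α_b f)(x) (x-a)^{α-1} dx = f(a) - f(b), where (ᶜxD^α_b f)(x) = (-1/Γ(1-α)) ∫_x^b f'(u)(u-x)^{-α} du is the right Caputo derivative. -/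
/-!
After multiplying by `(x - a) ^ (α - 1)`, the left-hand side is an iterated integral of
`f' u * (u - x) ^ (-α) * (x - a) ^ (α - 1)` over the triangle `a < x < u < b`. Exchanging the
order of integration, the inner integral `∫ x in a..u, (u - x) ^ (-α) * (x - a) ^ (α - 1)` is the
Beta integral `B(α, 1 - α) = Γ(α) Γ(1 - α)`, independent of `u`, so the whole expression collapses
to `-∫ x in a..b, f' x = f a - f b`.
-/

open MeasureTheory intervalIntegral Real Set

/-- The right Caputo fractional derivative of order `α ∈ (0,1)`. -/
noncomputable def rightCaputo (α b : ℝ) (f : ℝ → ℝ) (x : ℝ) : ℝ :=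
  (-1 / Real.Gamma (1 - α)) * ∫ u in x..b, deriv f u * (u - x) ^ (-α)

theorem integral_rpow_mul_one_sub_rpow {p q : ℝ} (hp : 0 < p) (hq : 0 < q) :
    ∫ t in (0 : ℝ)..1, t ^ (p - 1) * (1 - t) ^ (q - 1) = Gamma p * Gamma q / Gamma (p + q) := by
  have h := Complex.betaIntegral_eq_Gamma_mul_div p q (by simpa using hp) (by simpa using hq)
  have hcast : ∀ t ∈ uIcc (0 : ℝ) 1, (t : ℂ) ^ ((p : ℂ) - 1) * (1 - (t : ℂ)) ^ ((q : ℂ) - 1) =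
      ((t ^ (p - 1) * (1 - t) ^ (q - 1) : ℝ) : ℂ) := by
    intro t ht
    rw [uIcc_of_le zero_le_one] at ht
    push_cast
    rw [Complex.ofReal_cpow ht.1, Complex.ofReal_cpow (sub_nonneg.2 ht.2)]
    push_cast
    rfl
  rw [Complex.betaIntegral, integral_congr hcast, integral_ofReal, ← Complex.ofReal_add,
    Complex.Gamma_ofReal, Complex.Gamma_ofReal, Complex.Gamma_ofReal] at h
  exact_mod_cast h

theorem integral_sub_rpow_mul_sub_rpow_s7 {p q a u : ℝ} (hp : 0 < p) (hq : 0 < q) (hau : a < u) :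
    ∫ x in a..u, (x - a) ^ (p - 1) * (u - x) ^ (q - 1) =
      (u - a) ^ (p + q - 1) * (Gamma p * Gamma q / Gamma (p + q)) := by
  have hua : 0 < u - a := sub_pos.2 hau
  have hsubst := integral_comp_mul_add (a := 0) (b := 1)
    (fun x => (x - a) ^ (p - 1) * (u - x) ^ (q - 1)) hua.ne' a
  have hscale : ∀ t ∈ uIcc (0 : ℝ) 1,
      ((u - a) * t + a - a) ^ (p - 1) * (u - ((u - a) * t + a)) ^ (q - 1) =
        ((u - a) ^ (p - 1) * (u - a) ^ (q - 1)) * (t ^ (p - 1) * (1 - t) ^ (q - 1)) := by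
    intro t ht
    rw [uIcc_of_le zero_le_one] at ht
    rw [add_sub_cancel_right, show u - ((u - a) * t + a) = (u - a) * (1 - t) by ring,
      mul_rpow hua.le ht.1, mul_rpow hua.le (sub_nonneg.2 ht.2)]
    ring
  rw [integral_congr hscale, intervalIntegral.integral_const_mul,
    integral_rpow_mul_one_sub_rpow hp hq, mul_zero, zero_add, mul_one, sub_add_cancel,
    smul_eq_mul] at hsubst
  rw [eq_inv_mul_iff_mul_eq₀ hua.ne'] at hsubst
  rw [← hsubst, show p + q - 1 = (p - 1) + (q - 1) + 1 by ring, rpow_add hua, rpow_add hua,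
    rpow_one]
  ring

def openTriangle (a b : ℝ) : Set (ℝ × ℝ) := {p | a < p.1 ∧ p.1 < p.2 ∧ p.2 < b}

section OpenTriangle

variable {a b : ℝ}

theorem measurableSet_openTriangle : MeasurableSet (openTriangle a b) :=
  (measurableSet_lt measurable_const measurable_fst).inter
    ((measurableSet_lt measurable_fst measurable_snd).inter
      (measurableSet_lt measurable_snd measurable_const))

theorem mk_mem_openTriangle_iff_left {x u : ℝ} :
    (x, u) ∈ openTriangle a b ↔ x ∈ Ioo a b ∧ u ∈ Ioo x b := by
  simp only [openTriangle, mem_ofPred_eq, mem_Ioo]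
  constructor
  · rintro ⟨hax, hxu, hub⟩
    exact ⟨⟨hax, hxu.trans hub⟩, hxu, hub⟩
  · rintro ⟨⟨hax, -⟩, hxu, hub⟩
    exact ⟨hax, hxu, hub⟩

theorem mk_mem_openTriangle_iff_right {x u : ℝ} :
    (x, u) ∈ openTriangle a b ↔ u ∈ Ioo a b ∧ x ∈ Ioo a u := by
  simp only [openTriangle, mem_ofPred_eq, mem_Ioo]
  constructor
  · rintro ⟨hax, hxu, hub⟩
    exact ⟨⟨hax.trans hxu, hub⟩, hax, hxu⟩
  · rintro ⟨⟨-, hub⟩, hax, hxu⟩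
    exact ⟨hax, hxu, hub⟩

theorem indicator_openTriangle_apply_left {M : Type*} [Zero M] (G : ℝ × ℝ → M) (x u : ℝ) :
    (openTriangle a b).indicator G (x, u) =
      (Ioo a b).indicator (fun x => (Ioo x b).indicator (fun u => G (x, u)) u) x := by
  classical
  simp only [indicator_apply, mk_mem_openTriangle_iff_left, ite_and]

theorem indicator_openTriangle_apply_right {M : Type*} [Zero M] (G : ℝ × ℝ → M) (x u : ℝ) :
    (openTriangle a b).indicator G (x, u) =
      (Ioo a b).indicator (fun u => (Ioo a u).indicator (fun x => G (x, u)) x) u := by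
  classical
  simp only [indicator_apply, mk_mem_openTriangle_iff_right, ite_and]

variable {E : Type*} [NormedAddCommGroup E] [NormedSpace ℝ E]

theorem integral_indicator_openTriangle_left (G : ℝ × ℝ → E) (x : ℝ) :
    ∫ u, (openTriangle a b).indicator G (x, u) =
      (Ioo a b).indicator (fun x => ∫ u in Ioo x b, G (x, u)) x := by
  by_cases hx : x ∈ Ioo a b <;>
    simp [indicator_openTriangle_apply_left, hx,
      MeasureTheory.integral_indicator measurableSet_Ioo]

theorem integral_indicator_openTriangle_right (G : ℝ × ℝ → E) (u : ℝ) :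
    ∫ x, (openTriangle a b).indicator G (x, u) =
      (Ioo a b).indicator (fun u => ∫ x in Ioo a u, G (x, u)) u := by
  by_cases hu : u ∈ Ioo a b <;>
    simp [indicator_openTriangle_apply_right, hu,
      MeasureTheory.integral_indicator measurableSet_Ioo]

theorem integral_integral_swap_openTriangle (hab : a ≤ b) {F : ℝ → ℝ → E}
    (hF : IntegrableOn (Function.uncurry F) (openTriangle a b)) :
    ∫ x in a..b, ∫ u in x..b, F x u = ∫ u in a..b, ∫ x in a..u, F x u := by
  have hswap := integral_integral_swap (μ := volume) (ν := volume)
    (f := fun x u => (openTriangle a b).indicator (Function.uncurry F) (x, u))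
    (by rw [← Measure.volume_eq_prod]; exact hF.integrable_indicator measurableSet_openTriangle)
  simp only [integral_indicator_openTriangle_left, integral_indicator_openTriangle_right,
    MeasureTheory.integral_indicator measurableSet_Ioo, Function.uncurry_apply_pair] at hswap
  rw [integral_of_le hab, integral_of_le hab, integral_Ioc_eq_integral_Ioo,
    integral_Ioc_eq_integral_Ioo]
  calc ∫ x in Ioo a b, ∫ u in x..b, F x u = ∫ x in Ioo a b, ∫ u in Ioo x b, F x u :=
        setIntegral_congr_fun measurableSet_Ioo fun x hx => by
          rw [integral_of_le hx.2.le, integral_Ioc_eq_integral_Ioo]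
    _ = ∫ u in Ioo a b, ∫ x in Ioo a u, F x u := hswap
    _ = ∫ u in Ioo a b, ∫ x in a..u, F x u :=
        setIntegral_congr_fun measurableSet_Ioo fun u hu => by
          rw [integral_of_le hu.1.le, integral_Ioc_eq_integral_Ioo]

end OpenTriangle

theorem integral_sub_rpow_neg_mul_sub_rpow {α a u : ℝ} (hα₀ : 0 < α) (hα₁ : α < 1)
    (hau : a < u) :
    ∫ x in a..u, (u - x) ^ (-α) * (x - a) ^ (α - 1) = Gamma α * Gamma (1 - α) := by
  have h := integral_sub_rpow_mul_sub_rpow_s7 hα₀ (sub_pos.2 hα₁) hau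
  rw [add_sub_cancel, sub_self, rpow_zero, Gamma_one, div_one, one_mul, sub_sub_cancel_left]
    at h
  simpa only [mul_comm] using h

theorem intervalIntegrable_sub_rpow_neg_mul_sub_rpow {α a u : ℝ} (hα₀ : 0 < α) (hα₁ : α < 1)
    (hau : a < u) :
    IntervalIntegrable (fun x => (u - x) ^ (-α) * (x - a) ^ (α - 1)) volume a u :=
  intervalIntegrable_of_integral_ne_zero <| by
    rw [integral_sub_rpow_neg_mul_sub_rpow hα₀ hα₁ hau]
    exact (mul_pos (Gamma_pos_of_pos hα₀) (Gamma_pos_of_pos (sub_pos.2 hα₁))).ne'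

theorem integrableOn_openTriangle_mul_sub_rpow_neg_mul_sub_rpow {α a b : ℝ} (hα₀ : 0 < α)
    (hα₁ : α < 1) {g : ℝ → ℝ} (hgm : Measurable g) (hg : IntegrableOn g (Ioo a b)) :
    IntegrableOn (Function.uncurry fun x u => g u * (u - x) ^ (-α) * (x - a) ^ (α - 1))
      (openTriangle a b) := by
  set F := Function.uncurry fun x u : ℝ => g u * (u - x) ^ (-α) * (x - a) ^ (α - 1)
  have hFm : Measurable F := by fun_prop
  rw [← integrable_indicator_iff measurableSet_openTriangle, Measure.volume_eq_prod,
    integrable_prod_iff' (hFm.indicator measurableSet_openTriangle).aestronglyMeasurable]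
  refine ⟨Filter.Eventually.of_forall fun u => ?_, ?_⟩
  · by_cases hu : u ∈ Ioo a b
    · simp only [indicator_openTriangle_apply_right, indicator_of_mem hu,
        integrable_indicator_iff measurableSet_Ioo]
      have hker := (intervalIntegrable_sub_rpow_neg_mul_sub_rpow hα₀ hα₁ hu.1).const_mul (g u)
      rw [intervalIntegrable_iff_integrableOn_Ioo_of_le hu.1.le] at hker
      simpa only [F, Function.uncurry_apply_pair, mul_assoc] using hker
    · simp [indicator_openTriangle_apply_right, hu]
  · have hsection : (fun u => ∫ x, ‖(openTriangle a b).indicator F (x, u)‖) =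
        (Ioo a b).indicator fun u => ‖g u‖ * (Gamma α * Gamma (1 - α)) := by
      ext u
      simp only [norm_indicator_eq_indicator_norm, integral_indicator_openTriangle_right]
      by_cases hu : u ∈ Ioo a b
      · simp only [indicator_of_mem hu]
        rw [← integral_sub_rpow_neg_mul_sub_rpow hα₀ hα₁ hu.1,
          ← intervalIntegral.integral_const_mul, integral_of_le hu.1.le,
          integral_Ioc_eq_integral_Ioo]
        refine setIntegral_congr_fun measurableSet_Ioo fun x hx => ?_
        simp only [F, Function.uncurry_apply_pair, norm_mul, mul_assoc,
          norm_of_nonneg (rpow_nonneg (sub_pos.2 hx.2).le _),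
          norm_of_nonneg (rpow_nonneg (sub_pos.2 hx.1).le _)]
      · simp [hu]
    rw [hsection, integrable_indicator_iff measurableSet_Ioo]
    exact hg.norm.mul_const _

theorem rightCaputo_mul (α b : ℝ) (f : ℝ → ℝ) (x c : ℝ) :
    rightCaputo α b f x * c =
      -1 / Gamma (1 - α) * ∫ u in x..b, deriv f u * (u - x) ^ (-α) * c := by
  rw [rightCaputo, intervalIntegral.integral_mul_const, mul_assoc]

/-- Right-sided fundamental theorem of Caputo fractional calculus:
`(1/Γ(α)) ∫_a^b (ᶜxD^α_b f)(x) (x-a)^{α-1} dx = f(a) - f(b)`. -/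
theorem caputo_FTC_right (α a b : ℝ) (hα₀ : 0 < α) (hα₁ : α < 1) (hab : a < b)
    (f : ℝ → ℝ)
    (hdiff : ∀ x ∈ Set.Icc a b, HasDerivAt f (deriv f x) x)
    (hcont : ContinuousOn (deriv f) (Set.Icc a b)) :
    (1 / Real.Gamma α) * (∫ x in a..b, rightCaputo α b f x * (x - a) ^ (α - 1))
      = f a - f b := by
  have hΓα : Gamma α ≠ 0 := (Gamma_pos_of_pos hα₀).ne'
  have hΓ1α : Gamma (1 - α) ≠ 0 := (Gamma_pos_of_pos (sub_pos.2 hα₁)).ne'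
  have hF := integrableOn_openTriangle_mul_sub_rpow_neg_mul_sub_rpow hα₀ hα₁
    (measurable_deriv f) (hcont.integrableOn_Icc.mono_set Ioo_subset_Icc_self)
  have hFTC : ∫ u in a..b, deriv f u = f b - f a :=
    integral_eq_sub_of_hasDerivAt (fun x hx => hdiff x (by rwa [uIcc_of_le hab.le] at hx))
      (hcont.intervalIntegrable_of_Icc hab.le)
  calc 1 / Gamma α * ∫ x in a..b, rightCaputo α b f x * (x - a) ^ (α - 1)
      = -1 / (Gamma α * Gamma (1 - α)) *
          ∫ x in a..b, ∫ u in x..b, deriv f u * (u - x) ^ (-α) * (x - a) ^ (α - 1) := by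
        simp only [rightCaputo_mul, intervalIntegral.integral_const_mul]
        ring
    _ = -1 / (Gamma α * Gamma (1 - α)) *
          ∫ u in a..b, ∫ x in a..u, deriv f u * (u - x) ^ (-α) * (x - a) ^ (α - 1) := by
        rw [integral_integral_swap_openTriangle hab.le hF]
    _ = -1 / (Gamma α * Gamma (1 - α)) * ∫ u in a..b, deriv f u * (Gamma α * Gamma (1 - α)) := by
        congr 1
        refine integral_congr_ae (Filter.Eventually.of_forall fun u hu => ?_)
        rw [uIoc_of_le hab.le] at hu
        simp only [mul_assoc, intervalIntegral.integral_const_mul,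
          integral_sub_rpow_neg_mul_sub_rpow hα₀ hα₁ hu.1]
    _ = f a - f b := by
        rw [intervalIntegral.integral_mul_const, hFTC]
        field_simp
        ring
end
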